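/- arXiv:1605.00415 — 4 statements merged into one kernel-verified Lean document; each statement's English description precedes it below -/
import Mathlib

section
/- A non-negative integer-valued random variable Z has the Poisson distribution with parameter λ > 0 if and only if E[λ·g(Z+1) − Z·g(Z)] = 0 for all bounded functions g : ℕ → ℝ. -/
/-!
Against a mass function `p` on `ℕ`, the Stein operator `g ↦ l g(n+1) - n g(n)` is adjoint to the
recurrence `(n+1) p(n+1) = l p(n)`: shifting the index gives
`∑ p(n) (l g(n+1) - n g(n)) = ∑ (l p(n) - (n+1) p(n+1)) g(n+1)`.
The Poisson weights satisfy the recurrence, and testing against the indicator of `{n+1}` recovers it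
from the vanishing expectations. The recurrence determines `p` up to the factor `p 0`, which
`∑ p = 1` fixes as `exp (-l)`.
-/

open MeasureTheory
open scoped Nat

section LawOfCountableVariable

variable {Ω α : Type*} [MeasurableSpace Ω] [MeasurableSpace α] [Countable α]
  [MeasurableSingletonClass α] {μ : Measure Ω} {Z : Ω → α}

theorem integral_comp_eq_tsum_measureReal_preimage {E : Type*} [NormedAddCommGroup E]
    [NormedSpace ℝ E] [CompleteSpace E] (hZ : Measurable Z) {f : α → E}
    (hf : Integrable (fun ω => f (Z ω)) μ) :
    ∫ ω, f (Z ω) ∂μ = ∑' a, μ.real (Z ⁻¹' {a}) • f a := by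
  have hfZ : Integrable f (μ.map Z) :=
    (integrable_map_measure .of_discrete hZ.aemeasurable).2 hf
  rw [← integral_map hZ.aemeasurable hfZ.aestronglyMeasurable, integral_countable hfZ]
  simp_rw [map_measureReal_apply hZ (measurableSet_singleton _)]

theorem hasSum_measureReal_preimage_singleton [IsProbabilityMeasure μ] (hZ : Measurable Z) :
    HasSum (fun a => μ.real (Z ⁻¹' {a})) 1 := by
  have htsum : ∑' a, μ (Z ⁻¹' {a}) = 1 := by
    rw [← tsum_univ, tsum_measure_preimage_singleton Set.countable_univ
      (fun a _ => hZ (measurableSet_singleton a)), Set.preimage_univ, measure_univ]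
  have hsum := ENNReal.hasSum_toReal (htsum ▸ ENNReal.one_ne_top)
  rwa [← ENNReal.tsum_toReal_eq fun _ => measure_ne_top μ _, htsum, ENNReal.toReal_one] at hsum

end LawOfCountableVariable

theorem integrable_comp_of_abs_le_add_mul {Ω : Type*} [MeasurableSpace Ω] {μ : Measure Ω}
    [IsFiniteMeasure μ] {Z : Ω → ℕ} (hZ : Measurable Z)
    (hZint : Integrable (fun ω => (Z ω : ℝ)) μ) {f : ℕ → ℝ} {a b : ℝ}
    (hf : ∀ n, |f n| ≤ a + b * n) : Integrable (fun ω => f (Z ω)) μ :=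
  ((integrable_const a).add (hZint.const_mul b)).mono'
    ((measurable_of_countable f).comp hZ).aestronglyMeasurable
    (ae_of_all _ fun ω => hf (Z ω))

section SteinOperator

variable {p : ℕ → ℝ} {l : ℝ}

theorem tsum_mul_stein_eq_zero (hrec : ∀ n : ℕ, (n + 1) * p (n + 1) = l * p n) {g : ℕ → ℝ}
    (hg : Summable fun n => p n * g (n + 1)) :
    ∑' n, p n * (l * g (n + 1) - n * g n) = 0 := by
  have hshift : HasSum (fun n : ℕ => p n * (n * g n)) (l * ∑' n, p n * g (n + 1)) := by
    rw [← hasSum_nat_add_iff' 1, Finset.sum_range_one, CharP.cast_eq_zero, zero_mul, mul_zero,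
      sub_zero]
    exact (hg.hasSum.mul_left l).congr_fun fun n => by
      push_cast
      linear_combination g (n + 1) * hrec n
  calc ∑' n, p n * (l * g (n + 1) - n * g n)
      = ∑' n, (l * (p n * g (n + 1)) - p n * (n * g n)) := tsum_congr fun n => by ring
    _ = l * ∑' n, p n * g (n + 1) - l * ∑' n, p n * g (n + 1) :=
      ((hg.hasSum.mul_left l).sub hshift).tsum_eq
    _ = 0 := sub_self _

theorem succ_mul_eq_of_tsum_mul_stein_eq_zero
    (h : ∀ g : ℕ → ℝ, (∃ C, ∀ n, |g n| ≤ C) → ∑' n, p n * (l * g (n + 1) - n * g n) = 0)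
    (n : ℕ) : (n + 1) * p (n + 1) = l * p n := by
  let g : ℕ → ℝ := fun m => if m = n + 1 then 1 else 0
  have hg : ∃ C, ∀ m, |g m| ≤ C := ⟨1, fun m => by unfold g; split_ifs <;> simp⟩
  have hsum : HasSum (fun m => p m * (l * g (m + 1) - m * g m))
      (l * p n - (n + 1) * p (n + 1)) := by
    refine ((hasSum_ite_eq n (l * p n)).sub
      (hasSum_ite_eq (n + 1) ((n + 1 : ℝ) * p (n + 1)))).congr_fun fun m => ?_
    simp only [g]
    split_ifs <;> first | omega | (subst_vars; push_cast; ring)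
  linarith [hsum.tsum_eq.symm.trans (h g hg)]

theorem eq_mul_pow_div_factorial_of_succ_mul_eq (hrec : ∀ n : ℕ, (n + 1) * p (n + 1) = l * p n)
    (n : ℕ) : p n = p 0 * l ^ n / n ! := by
  induction n with
  | zero => simp
  | succ n ih =>
    have := hrec n
    rw [ih] at this
    rw [Nat.factorial_succ]
    push_cast
    field_simp at this ⊢
    linear_combination this

theorem eq_poisson_of_succ_mul_eq (hp : HasSum p 1)
    (hrec : ∀ n : ℕ, (n + 1) * p (n + 1) = l * p n) (n : ℕ) :
    p n = l ^ n * Real.exp (-l) / n ! := by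
  have hexp : HasSum p (p 0 * Real.exp l) := by
    rw [Real.exp_eq_exp_ℝ]
    exact ((NormedSpace.expSeries_div_hasSum_exp l).mul_left (p 0)).congr_fun fun n => by
      rw [eq_mul_pow_div_factorial_of_succ_mul_eq hrec, mul_div_assoc]
  have hp0 : p 0 = Real.exp (-l) := by
    rw [Real.exp_neg]
    exact eq_inv_of_mul_eq_one_left (hexp.unique hp)
  rw [eq_mul_pow_div_factorial_of_succ_mul_eq hrec, hp0]
  ring

theorem succ_mul_pow_mul_exp_neg_div_factorial (l : ℝ) (n : ℕ) :
    (n + 1) * (l ^ (n + 1) * Real.exp (-l) / (n + 1)!) = l * (l ^ n * Real.exp (-l) / n !) := by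
  rw [Nat.factorial_succ]
  push_cast
  field_simp
  ring

theorem eq_poisson_iff_tsum_mul_stein_eq_zero (hp0 : ∀ n, 0 ≤ p n) (hp : HasSum p 1) :
    (∀ k : ℕ, p k = l ^ k * Real.exp (-l) / k !) ↔
      ∀ g : ℕ → ℝ, (∃ C, ∀ n, |g n| ≤ C) → ∑' n, p n * (l * g (n + 1) - n * g n) = 0 := by
  refine ⟨fun hpois g ⟨C, hC⟩ => tsum_mul_stein_eq_zero (fun n => ?_) ?_,
    fun h => eq_poisson_of_succ_mul_eq hp (succ_mul_eq_of_tsum_mul_stein_eq_zero h)⟩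
  · rw [hpois, hpois]
    exact_mod_cast succ_mul_pow_mul_exp_neg_div_factorial l n
  · refine (hp.summable.mul_right C).of_norm_bounded fun n => ?_
    rw [norm_mul, Real.norm_of_nonneg (hp0 n), Real.norm_eq_abs]
    exact mul_le_mul_of_nonneg_left (hC _) (hp0 n)

end SteinOperator

theorem poisson_characterization_general {Ω : Type*} [MeasurableSpace Ω]
    (μ : Measure Ω) [IsProbabilityMeasure μ]
    (Z : Ω → ℕ) (hZmeas : Measurable Z)
    (hZint : Integrable (fun ω => (Z ω : ℝ)) μ)
    (l : ℝ) :
    (∀ k : ℕ, (μ {ω | Z ω = k}).toReal = l ^ k * Real.exp (-l) / (Nat.factorial k)) ↔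
      (∀ g : ℕ → ℝ, (∃ C : ℝ, ∀ n : ℕ, |g n| ≤ C) →
        ∫ ω, (l * g (Z ω + 1) - (Z ω : ℝ) * g (Z ω)) ∂μ = 0) := by
  have hlaw : ∀ g : ℕ → ℝ, (∃ C : ℝ, ∀ n : ℕ, |g n| ≤ C) →
      ∫ ω, (l * g (Z ω + 1) - (Z ω : ℝ) * g (Z ω)) ∂μ =
        ∑' n, μ.real (Z ⁻¹' {n}) * (l * g (n + 1) - n * g n) := by
    rintro g ⟨C, hC⟩
    have hbound : ∀ n : ℕ, |l * g (n + 1) - n * g n| ≤ |l| * C + C * n := fun n =>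
      calc |l * g (n + 1) - n * g n| ≤ |l| * |g (n + 1)| + n * |g n| := by
            simpa [abs_mul] using abs_sub (l * g (n + 1)) (n * g n)
        _ ≤ |l| * C + C * n := by
            rw [mul_comm C]
            gcongr <;> exact hC _
    exact integral_comp_eq_tsum_measureReal_preimage hZmeas
      (integrable_comp_of_abs_le_add_mul hZmeas hZint hbound)
  exact (eq_poisson_iff_tsum_mul_stein_eq_zero (fun _ => measureReal_nonneg)
    (hasSum_measureReal_preimage_singleton hZmeas)).trans
    (forall₂_congr fun g hg => by rw [hlaw g hg])

/-- A non-negative integer-valued random variable `Z` has the Poisson distribution with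
parameter `l > 0` if and only if `E[l·g(Z+1) − Z·g(Z)] = 0` for all bounded `g : ℕ → ℝ`. -/
theorem poisson_characterization {Ω : Type*} [MeasurableSpace Ω]
    (μ : Measure Ω) [IsProbabilityMeasure μ]
    (Z : Ω → ℕ) (hZmeas : Measurable Z)
    (hZint : Integrable (fun ω => (Z ω : ℝ)) μ)
    (l : ℝ) (hl : 0 < l) :
    (∀ k : ℕ, (μ {ω | Z ω = k}).toReal = l ^ k * Real.exp (-l) / (Nat.factorial k)) ↔
      (∀ g : ℕ → ℝ, (∃ C : ℝ, ∀ n : ℕ, |g n| ≤ C) →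
        ∫ ω, (l * g (Z ω + 1) - (Z ω : ℝ) * g (Z ω)) ∂μ = 0) :=
  poisson_characterization_general μ Z hZmeas hZint l
end

section
/- If Z is Poisson distributed with parameter λ > 0 and g(k) := E[λ·g(k+1) − k·g(k)] satisfies the Chen-Stein equation for an indicator test function, then the bounded solution g_h of the Chen-Stein equation satisfies ‖Δg_h‖_∞ ≤ (1 − e^{−λ})/λ ≤ min{1, 1/λ}, where Δg_h(k) = g_h(k+1) − g_h(k). -/
/-!
Multiplying the equation at `m` by the Poisson weight `p m` and using `m p m = l p (m - 1)` makes
it telescope: `l p k g (k + 1) = ∑_{m ≤ k} p m (h m - E h(Z))`. Splitting `E h(Z)` into the mass of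
`h` below `k + 1`, at `k + 1` and above `k + 1`, the quantity `l p k p (k + 1) Δg (k + 1)` becomes a
linear combination of these three masses. The log-concavity `p m p (n + 1) ≤ p (m + 1) p n`
(`m ≤ n`) makes the outer coefficients nonpositive and bounds the middle one, which gives the upper
bound `(1 - e^{-l}) / l` for `0 ≤ h ≤ 1`. The lower bound is the upper bound for `1 - h`, whose
solution is `-g`.
-/

open Finset Real

noncomputable def poissonWeight (l : ℝ) (m : ℕ) : ℝ := l ^ m * Real.exp (-l) / (Nat.factorial m)

section PoissonWeight

variable {l : ℝ}

theorem poissonWeight_zero (l : ℝ) : poissonWeight l 0 = exp (-l) := by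
  simp [poissonWeight]

theorem poissonWeight_pos (hl : 0 < l) (m : ℕ) : 0 < poissonWeight l m := by
  unfold poissonWeight
  positivity

theorem succ_mul_poissonWeight_succ (l : ℝ) (m : ℕ) :
    (m + 1) * poissonWeight l (m + 1) = l * poissonWeight l m := by
  simp only [poissonWeight, Nat.factorial_succ, Nat.cast_mul, Nat.cast_succ, pow_succ]
  field_simp

theorem hasSum_poissonWeight (l : ℝ) : HasSum (poissonWeight l) 1 := by
  have h := (NormedSpace.expSeries_div_hasSum_exp l).mul_left (exp (-l))
  rw [← exp_eq_exp_ℝ, ← exp_add, neg_add_cancel, exp_zero] at h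
  have hw : poissonWeight l = fun m => exp (-l) * (l ^ m / m.factorial) := by
    ext m
    rw [poissonWeight, mul_div_assoc']
    ring
  rwa [hw]

theorem poissonWeight_mul_succ_le (hl : 0 < l) {m n : ℕ} (hmn : m ≤ n) :
    poissonWeight l m * poissonWeight l (n + 1) ≤ poissonWeight l (m + 1) * poissonWeight l n := by
  have hsucc (j : ℕ) : poissonWeight l (j + 1) = l * poissonWeight l j / (j + 1) := by
    rw [eq_div_iff (by positivity), mul_comm, succ_mul_poissonWeight_succ]
  have hm := poissonWeight_pos hl m
  have hn := poissonWeight_pos hl n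
  calc poissonWeight l m * poissonWeight l (n + 1)
      = l * poissonWeight l m * poissonWeight l n / (n + 1) := by rw [hsucc]; ring
    _ ≤ l * poissonWeight l m * poissonWeight l n / (m + 1) :=
      div_le_div_of_nonneg_left (by positivity) (by positivity) (by gcongr)
    _ = poissonWeight l (m + 1) * poissonWeight l n := by rw [hsucc]; ring

theorem poissonWeight_succ_mul_sum_le (hl : 0 < l) (k : ℕ) :
    poissonWeight l (k + 1) * ∑ m ∈ range (k + 1), poissonWeight l m ≤
      poissonWeight l k *
        (∑ m ∈ range (k + 1), poissonWeight l m + poissonWeight l (k + 1) - poissonWeight l 0) := by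
  rw [← sum_range_succ, sum_range_succ' (poissonWeight l) (k + 1), add_sub_cancel_right, mul_sum,
    mul_sum]
  refine sum_le_sum fun m hm => ?_
  rw [mul_comm, mul_comm (poissonWeight l k)]
  exact poissonWeight_mul_succ_le hl (Nat.lt_succ_iff.mp (mem_range.mp hm))

theorem poissonWeight_mul_tsum_le (hl : 0 < l) (k : ℕ) :
    poissonWeight l k * ∑' r, poissonWeight l (r + (k + 2)) ≤
      poissonWeight l (k + 1) * (poissonWeight l (k + 1) + ∑' r, poissonWeight l (r + (k + 2))) := by
  have hp := (hasSum_poissonWeight l).summable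
  have htail := ((summable_nat_add_iff (k + 1)).mpr hp).tsum_eq_zero_add
  simp only [zero_add, add_assoc, add_comm 1 (k + 1)] at htail
  rw [← htail, ← tsum_mul_left, ← tsum_mul_left]
  refine Summable.tsum_le_tsum (fun r => ?_) (((summable_nat_add_iff _).mpr hp).mul_left _)
    (((summable_nat_add_iff _).mpr hp).mul_left _)
  rw [show r + (k + 2) = r + 1 + k + 1 by omega, show r + (k + 1) = r + 1 + k by omega]
  exact poissonWeight_mul_succ_le hl (Nat.le_add_left k (r + 1))

end PoissonWeight

section ChenStein

variable {l : ℝ}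

theorem mul_poissonWeight_mul_eq_sum {f g : ℕ → ℝ}
    (hfg : ∀ k : ℕ, f k = l * g (k + 1) - k * g k) (k : ℕ) :
    l * poissonWeight l k * g (k + 1) = ∑ m ∈ range (k + 1), poissonWeight l m * f m := by
  induction k with
  | zero =>
    rw [sum_range_one, hfg 0]
    push_cast
    ring
  | succ k ih =>
    rw [sum_range_succ, ← ih, hfg (k + 1)]
    push_cast
    linear_combination g (k + 1) * succ_mul_poissonWeight_succ l k

variable {h g : ℕ → ℝ}

theorem summable_poissonWeight_mul (hl : 0 < l) (hh₀ : ∀ m, 0 ≤ h m) (hh₁ : ∀ m, h m ≤ 1) :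
    Summable fun m => poissonWeight l m * h m :=
  (hasSum_poissonWeight l).summable.of_nonneg_of_le
    (fun m => mul_nonneg (poissonWeight_pos hl m).le (hh₀ m))
    (fun m => mul_le_of_le_one_right (poissonWeight_pos hl m).le (hh₁ m))

theorem chenStein_mul_poissonWeight_eq
    (hCS : ∀ k : ℕ, h k - ∑' m, poissonWeight l m * h m = l * g (k + 1) - k * g k) (k : ℕ) :
    l * poissonWeight l k * g (k + 1) = ∑ m ∈ range (k + 1), poissonWeight l m * h m -
      (∑' m, poissonWeight l m * h m) * ∑ m ∈ range (k + 1), poissonWeight l m := by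
  rw [mul_poissonWeight_mul_eq_sum hCS, mul_sum, ← sum_sub_distrib]
  exact sum_congr rfl fun m _ => by ring

theorem chenStein_mul_succ_sub_le (hl : 0 < l) (hh₀ : ∀ m, 0 ≤ h m) (hh₁ : ∀ m, h m ≤ 1)
    (hCS : ∀ k : ℕ, h k - ∑' m, poissonWeight l m * h m = l * g (k + 1) - k * g k) (k : ℕ) :
    l * poissonWeight l k * poissonWeight l (k + 1) * (g (k + 2) - g (k + 1)) ≤
      poissonWeight l k * poissonWeight l (k + 1) * (1 - poissonWeight l 0) := by
  have hp := hasSum_poissonWeight l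
  have hph := summable_poissonWeight_mul hl hh₀ hh₁
  have hpos := poissonWeight_pos hl
  have hX := chenStein_mul_poissonWeight_eq hCS k
  have hY := chenStein_mul_poissonWeight_eq hCS (k + 1)
  rw [sum_range_succ (fun m => poissonWeight l m * h m) (k + 1),
    sum_range_succ (poissonWeight l) (k + 1)] at hY
  have hFG := hp.summable.sum_add_tsum_nat_add (k + 2)
  rw [sum_range_succ, hp.tsum_eq] at hFG
  have hAT := hph.sum_add_tsum_nat_add (k + 2)
  rw [sum_range_succ] at hAT
  have hhead := poissonWeight_succ_mul_sum_le hl k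
  have htail := poissonWeight_mul_tsum_le hl k
  set p := poissonWeight l
  set c := ∑' m, p m * h m
  set F := ∑ m ∈ range (k + 1), p m
  set A := ∑ m ∈ range (k + 1), p m * h m
  set G := ∑' r, p (r + (k + 2))
  set T := ∑' r, p (r + (k + 2)) * h (r + (k + 2))
  set x := p (k + 1) * h (k + 1)
  have hA₀ : 0 ≤ A := sum_nonneg fun m _ => mul_nonneg (hpos m).le (hh₀ m)
  have hx₀ : 0 ≤ x := mul_nonneg (hpos _).le (hh₀ _)
  have hxq : x ≤ p (k + 1) := mul_le_of_le_one_right (hpos _).le (hh₁ _)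
  have hT₀ : 0 ≤ T := tsum_nonneg fun r => mul_nonneg (hpos _).le (hh₀ _)
  have expand : l * p k * p (k + 1) * (g (k + 2) - g (k + 1)) =
      A * (p k * G - p (k + 1) * (p (k + 1) + G)) + x * (p k * G + p (k + 1) * F) +
        T * (p (k + 1) * F - p k * (F + p (k + 1))) := by
    linear_combination p k * hY - p (k + 1) * hX + (p (k + 1) * A - p k * (A + x)) * hFG -
      (p (k + 1) * F - p k * (F + p (k + 1))) * hAT
  have hp₀ : p 0 ≤ 1 := (poissonWeight_zero l).trans_le (exp_le_one_iff.mpr (by linarith))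
  rw [expand]
  linarith [mul_le_mul_of_nonneg_left htail hA₀, mul_le_mul_of_nonneg_left hhead hx₀,
    mul_le_mul_of_nonneg_left hhead hT₀, mul_nonneg hT₀ (mul_nonneg (hpos k).le (hpos 0).le),
    mul_nonneg (sub_nonneg.mpr hxq) (mul_nonneg (hpos k).le (sub_nonneg.mpr hp₀)),
    congrArg (x * p k * ·) hFG]

theorem chenStein_succ_sub_le (hl : 0 < l) (hh₀ : ∀ m, 0 ≤ h m) (hh₁ : ∀ m, h m ≤ 1)
    (hCS : ∀ k : ℕ, h k - ∑' m, poissonWeight l m * h m = l * g (k + 1) - k * g k) (k : ℕ) :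
    g (k + 2) - g (k + 1) ≤ (1 - exp (-l)) / l := by
  have hpq := mul_pos (poissonWeight_pos hl k) (poissonWeight_pos hl (k + 1))
  rw [le_div_iff₀ hl, ← poissonWeight_zero l]
  refine le_of_mul_le_mul_left ?_ hpq
  linarith [chenStein_mul_succ_sub_le hl hh₀ hh₁ hCS k]

theorem chenStein_sub_le (hl : 0 < l) (hh₀ : ∀ m, 0 ≤ h m) (hh₁ : ∀ m, h m ≤ 1) (hg₀ : g 0 = 0)
    (hCS : ∀ k : ℕ, h k - ∑' m, poissonWeight l m * h m = l * g (k + 1) - k * g k) :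
    ∀ k : ℕ, g (k + 1) - g k ≤ (1 - exp (-l)) / l
  | 0 => by
    have hc := (summable_poissonWeight_mul hl hh₀ hh₁).le_tsum 0
      fun m _ => mul_nonneg (poissonWeight_pos hl m).le (hh₀ m)
    rw [poissonWeight_zero] at hc
    have hg₁ := hCS 0
    rw [Nat.cast_zero, zero_mul, sub_zero] at hg₁
    have he : 0 ≤ 1 - exp (-l) := sub_nonneg.mpr (exp_le_one_iff.mpr (by linarith))
    rw [hg₀, sub_zero, le_div_iff₀ hl]
    nlinarith [mul_le_mul_of_nonneg_right (hh₁ 0) he]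
  | k + 1 => chenStein_succ_sub_le hl hh₀ hh₁ hCS k

theorem chenStein_abs_sub_le (hl : 0 < l) (hh₀ : ∀ m, 0 ≤ h m) (hh₁ : ∀ m, h m ≤ 1)
    (hg₀ : g 0 = 0)
    (hCS : ∀ k : ℕ, h k - ∑' m, poissonWeight l m * h m = l * g (k + 1) - k * g k) (k : ℕ) :
    |g (k + 1) - g k| ≤ (1 - exp (-l)) / l := by
  have hc : ∑' m, poissonWeight l m * (1 - h m) = 1 - ∑' m, poissonWeight l m * h m := by
    simp only [mul_sub, mul_one]
    rw [(hasSum_poissonWeight l).summable.tsum_sub (summable_poissonWeight_mul hl hh₀ hh₁),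
      (hasSum_poissonWeight l).tsum_eq]
  have hCS' : ∀ k : ℕ, (1 - h k) - ∑' m, poissonWeight l m * (1 - h m) =
      l * -g (k + 1) - k * -g k := fun k => by
    rw [hc]
    linarith [hCS k]
  have upper := chenStein_sub_le hl hh₀ hh₁ hg₀ hCS k
  have lower := chenStein_sub_le (g := fun n => -g n) hl (fun m => sub_nonneg.mpr (hh₁ m))
    (fun m => sub_le_self 1 (hh₀ m)) (neg_eq_zero.mpr hg₀) hCS' k
  exact abs_le.mpr ⟨by linarith, upper⟩

end ChenStein

theorem one_sub_exp_neg_div_le_min {l : ℝ} (hl : 0 < l) : (1 - exp (-l)) / l ≤ min 1 (1 / l) := by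
  refine le_min ?_ ?_
  · rw [div_le_one hl]
    linarith [add_one_le_exp (-l)]
  · gcongr
    linarith [exp_pos (-l)]

theorem chen_stein_solution_bound_general (l : ℝ) (hl : 0 < l) (B : Set ℕ) (g : ℕ → ℝ)
    (h0 : g 0 = 0)
    (hCS : ∀ k : ℕ,
      B.indicator (fun _ => (1 : ℝ)) k
          - ∑' m : ℕ, (l ^ m * Real.exp (-l) / (Nat.factorial m))
              * B.indicator (fun _ => (1 : ℝ)) m
        = l * g (k + 1) - (k : ℝ) * g k) :
    (∀ k : ℕ, |g (k + 1) - g k| ≤ (1 - Real.exp (-l)) / l) ∧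
      (1 - Real.exp (-l)) / l ≤ min 1 (1 / l) :=
  ⟨chenStein_abs_sub_le hl (fun _ => Set.indicator_nonneg (fun _ _ => zero_le_one) _)
    (fun m => Set.indicator_le_self' (fun _ _ => zero_le_one) m) h0 hCS,
    one_sub_exp_neg_div_le_min hl⟩

/-- If `g` is the bounded solution (with `g 0 = 0`) of the Chen-Stein equation
`h(k) − E[h(Z)] = l·g(k+1) − k·g(k)` for the indicator test function `h = 1_B`,
where `Z` is Poisson with parameter `l > 0`, then the first forward difference of `g`
satisfies `‖Δg‖_∞ ≤ (1 − e^{−l})/l ≤ min{1, 1/l}`. -/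
theorem chen_stein_solution_bound (l : ℝ) (hl : 0 < l) (B : Set ℕ) (g : ℕ → ℝ)
    (hbdd : ∃ C : ℝ, ∀ n : ℕ, |g n| ≤ C) (h0 : g 0 = 0)
    (hCS : ∀ k : ℕ,
      B.indicator (fun _ => (1 : ℝ)) k
          - ∑' m : ℕ, (l ^ m * Real.exp (-l) / (Nat.factorial m))
              * B.indicator (fun _ => (1 : ℝ)) m
        = l * g (k + 1) - (k : ℝ) * g k) :
    (∀ k : ℕ, |g (k + 1) - g k| ≤ (1 - Real.exp (-l)) / l) ∧
      (1 - Real.exp (-l)) / l ≤ min 1 (1 / l) :=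
  chen_stein_solution_bound_general l hl B g h0 hCS
end

section
/- For natural numbers k, l, N with k ≤ l ≤ N, define p_{l,N} := 1/((6N−1)(6N−3)⋯(6N−2l+1)) and a_{k,N} := 3^k · 2N(2N−1)⋯(2N−k+1). Then a_{k,N} · p_{l,N} ≤ (1 + 1/(6N−1)) · N^{k−l} ≤ (6/5) · N^{k−l}. -/
open Finset

/-- `p_{l,N} = 1/((6N−1)(6N−3)⋯(6N−2l+1))`. -/
noncomputable def pCfg (l N : ℕ) : ℝ :=
  ∏ j ∈ Finset.range l, 1 / (6 * (N : ℝ) - 2 * ((j : ℝ) + 1) + 1)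

/-- `a_{k,N} = 3^k · 2N(2N−1)⋯(2N−k+1)`. -/
noncomputable def aCfg (k N : ℕ) : ℝ :=
  3 ^ k * ∏ j ∈ Finset.range k, (2 * (N : ℝ) - (j : ℝ))

/-!
Pair the `k` factors of `a_{k,N}` with the first `k` factors of `p_{l,N}`: the quotient
`3(2N−j)/(6N−2j−1)` equals `6N/(6N−1) = 1 + 1/(6N−1)` for `j = 0` and is at most `1` for
`j ≥ 1`. Each of the remaining `l − k` factors `1/(6N−2j−1)` of `p_{l,N}` is at most `1/N`.
-/

section

variable {j k l N : ℕ}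

lemma pCfg_factor_pos (hj : j < 3 * N) : 0 < 6 * (N : ℝ) - 2 * ((j : ℝ) + 1) + 1 := by
  have : (j : ℝ) + 1 ≤ 3 * N := by exact_mod_cast hj
  linarith

lemma pCfg_mul_prod_Ico (hkl : k ≤ l) :
    pCfg k N * ∏ j ∈ Ico k l, 1 / (6 * (N : ℝ) - 2 * ((j : ℝ) + 1) + 1) = pCfg l N :=
  prod_range_mul_prod_Ico _ hkl

lemma aCfg_mul_pCfg_eq_prod (k N : ℕ) :
    aCfg k N * pCfg k N =
      ∏ j ∈ range k, 3 * (2 * (N : ℝ) - j) / (6 * (N : ℝ) - 2 * ((j : ℝ) + 1) + 1) := by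
  simp only [aCfg, pCfg, mul_assoc, ← prod_mul_distrib, mul_one_div]
  nth_rewrite 1 [← card_range k]
  simp only [pow_card_mul_prod, mul_div_assoc]

lemma three_mul_div_pCfg_factor_le_one (hj : 0 < j) (hjN : j < 3 * N) :
    3 * (2 * (N : ℝ) - j) / (6 * (N : ℝ) - 2 * ((j : ℝ) + 1) + 1) ≤ 1 := by
  have hj1 : (1 : ℝ) ≤ j := by exact_mod_cast hj
  rw [div_le_one (pCfg_factor_pos hjN)]
  linarith

lemma aCfg_mul_pCfg_self_le (hk : 0 < k) (hkN : k ≤ 2 * N) :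
    aCfg k N * pCfg k N ≤ 1 + 1 / (6 * (N : ℝ) - 1) := by
  obtain ⟨k, rfl⟩ := Nat.exists_eq_add_one_of_ne_zero hk.ne'
  have hN : (1 : ℝ) ≤ N := by exact_mod_cast (show 1 ≤ N by omega)
  have h6N : 0 < 6 * (N : ℝ) - 1 := by linarith
  have h_rest : ∏ j ∈ range k,
      3 * (2 * (N : ℝ) - (j + 1 : ℕ)) / (6 * (N : ℝ) - 2 * (((j + 1 : ℕ) : ℝ) + 1) + 1) ≤ 1 := by
    refine prod_le_one (fun j hj => ?_) (fun j hj => ?_)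
    · have hjN : ((j + 1 : ℕ) : ℝ) ≤ 2 * N := by
        exact_mod_cast (show j + 1 ≤ 2 * N by rw [mem_range] at hj; omega)
      exact div_nonneg (by linarith) (pCfg_factor_pos (by rw [mem_range] at hj; omega)).le
    · exact three_mul_div_pCfg_factor_le_one j.succ_pos (by rw [mem_range] at hj; omega)
  have h_first : 3 * (2 * (N : ℝ) - (0 : ℕ)) / (6 * (N : ℝ) - 2 * (((0 : ℕ) : ℝ) + 1) + 1)
      = 1 + 1 / (6 * (N : ℝ) - 1) := by
    rw [one_add_div h6N.ne']
    push_cast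
    ring_nf
  rw [aCfg_mul_pCfg_eq_prod, prod_range_succ', h_first]
  exact mul_le_of_le_one_left (by positivity) h_rest

lemma prod_Ico_pCfg_factor_le (hkl : k ≤ l) (hlN : l ≤ N) :
    ∏ j ∈ Ico k l, 1 / (6 * (N : ℝ) - 2 * ((j : ℝ) + 1) + 1) ≤ (N : ℝ) ^ ((k : ℤ) - l) := by
  have h_exp : (k : ℤ) - l = -((l - k : ℕ) : ℤ) := by push_cast [Nat.cast_sub hkl]; ring
  rw [h_exp, zpow_neg, zpow_natCast, ← inv_pow, ← Nat.card_Ico, ← prod_const]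
  refine prod_le_prod (fun j hj => ?_) (fun j hj => ?_)
  · exact (one_div_pos.2 (pCfg_factor_pos (by rw [mem_Ico] at hj; omega))).le
  · have hjN : (j : ℝ) + 1 ≤ N := by exact_mod_cast (show j + 1 ≤ N by rw [mem_Ico] at hj; omega)
    rw [one_div]
    exact inv_anti₀ (by linarith) (by linarith)

end

/-- For `1 ≤ k ≤ l ≤ N` one has
`a_{k,N}·p_{l,N} ≤ (1 + 1/(6N−1))·N^{k−l} ≤ (6/5)·N^{k−l}`. -/
theorem aCfg_mul_pCfg_le (k l N : ℕ) (hk : 0 < k) (hkl : k ≤ l) (hlN : l ≤ N) :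
    aCfg k N * pCfg l N ≤ (1 + 1 / (6 * (N : ℝ) - 1)) * (N : ℝ) ^ ((k : ℤ) - (l : ℤ)) ∧
      (1 + 1 / (6 * (N : ℝ) - 1)) * (N : ℝ) ^ ((k : ℤ) - (l : ℤ))
        ≤ (6 / 5) * (N : ℝ) ^ ((k : ℤ) - (l : ℤ)) := by
  have h6N : 5 ≤ 6 * (N : ℝ) - 1 := by
    have : (1 : ℝ) ≤ N := by exact_mod_cast (show 1 ≤ N by omega)
    linarith
  refine ⟨?_, mul_le_mul_of_nonneg_right ?_ (by positivity)⟩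
  · rw [← pCfg_mul_prod_Ico hkl, ← mul_assoc]
    exact mul_le_mul (aCfg_mul_pCfg_self_le hk (by omega)) (prod_Ico_pCfg_factor_le hkl hlN)
      (prod_nonneg fun j hj => (one_div_pos.2 (pCfg_factor_pos (by rw [mem_Ico] at hj; omega))).le)
      (by linarith [one_div_pos.2 (show 0 < 6 * (N : ℝ) - 1 by linarith)])
  · have : 1 / (6 * (N : ℝ) - 1) ≤ 1 / 5 := one_div_le_one_div_of_le (by norm_num) h6N
    linarith
end

section
/- For every ε > 0 there is a constant c_ε > 0 such that the number of equivalence classes (under cyclic permutation and reversal-with-swap) of nonempty words w in the matrices L = [[1,1],[0,1]] and R = [[1,0],[1,1]] containing both letters and having trace tr(w) ≤ k is at most c_ε · k^{2+ε}, for all k ≥ 2. -/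
/-- The matrix `L = [[1,1],[0,1]]`. -/
def Lmat : Matrix (Fin 2) (Fin 2) ℤ := !![1, 1; 0, 1]

/-- The matrix `R = [[1,0],[1,1]]`. -/
def Rmat : Matrix (Fin 2) (Fin 2) ℤ := !![1, 0; 1, 1]

/-- The product of matrices corresponding to a word in `{L, R}`
(`true` stands for `L`, `false` for `R`). -/
def wordProd (w : List Bool) : Matrix (Fin 2) (Fin 2) ℤ :=
  (w.map fun b => if b then Lmat else Rmat).prod

/-- One step of the equivalence on words: cyclic permutation, or reversal with `L`/`R`
swap. -/
def wordStep (w w' : List Bool) : Prop :=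
  w' = w.rotate 1 ∨ w' = w.reverse.map fun b => !b

/-- The equivalence relation on words generated by cyclic permutations and
reversal-with-swap. -/
def wordRel : List Bool → List Bool → Prop := Relation.EqvGen wordStep

/-!
A word containing both letters has a factor `LR` or `RL`, whose matrix has positive entries;
multiplying by the nonnegative determinant-one matrices of the rest of the word keeps the
entries positive. Distinct words give distinct matrices, since the first letter of a word is
read off from which row of its matrix dominates. So there are at most as many classes as
positive matrices `[[a, b], [c, d]]` of `SL₂(ℤ)` with `a + d ≤ k`, and such a matrix is
determined by `a, d ≤ k` and the divisor `b` of `ad - 1`. The divisor bound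
`τ(n) = O(n^{ε/2})` for `n ≤ k²` then gives `O(k^{2+ε})`.
-/

open Finset

def letterMat (b : Bool) : Matrix (Fin 2) (Fin 2) ℤ := if b then Lmat else Rmat

@[simp] lemma wordProd_nil : wordProd [] = 1 := rfl

@[simp] lemma wordProd_cons (b : Bool) (w : List Bool) :
    wordProd (b :: w) = letterMat b * wordProd w := by
  simp [wordProd, letterMat]

@[simp] lemma wordProd_append (u v : List Bool) :
    wordProd (u ++ v) = wordProd u * wordProd v := by
  simp [wordProd]

lemma Lmat_mul (N : Matrix (Fin 2) (Fin 2) ℤ) :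
    Lmat * N = !![N 0 0 + N 1 0, N 0 1 + N 1 1; N 1 0, N 1 1] := by
  ext i j
  fin_cases i <;> fin_cases j <;> simp [Lmat, Matrix.mul_apply]

lemma Rmat_mul (N : Matrix (Fin 2) (Fin 2) ℤ) :
    Rmat * N = !![N 0 0, N 0 1; N 0 0 + N 1 0, N 0 1 + N 1 1] := by
  ext i j
  fin_cases i <;> fin_cases j <;> simp [Rmat, Matrix.mul_apply]

lemma letterMat_nonneg (b : Bool) (i j : Fin 2) : 0 ≤ letterMat b i j := by
  cases b <;> fin_cases i <;> fin_cases j <;> simp [letterMat, Lmat, Rmat]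

lemma det_letterMat (b : Bool) : (letterMat b).det = 1 := by
  cases b <;> simp [letterMat, Lmat, Rmat, Matrix.det_fin_two]

lemma isUnit_letterMat (b : Bool) : IsUnit (letterMat b) :=
  (Matrix.isUnit_iff_isUnit_det _).2 (by simp [det_letterMat])

lemma wordProd_nonneg (w : List Bool) (i j : Fin 2) : 0 ≤ wordProd w i j := by
  induction w generalizing i j with
  | nil => rw [wordProd_nil, Matrix.one_apply]; split_ifs <;> simp
  | cons b w ih =>
    rw [wordProd_cons, Matrix.mul_apply]
    exact sum_nonneg fun k _ => mul_nonneg (letterMat_nonneg b i k) (ih k j)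

lemma det_wordProd (w : List Bool) : (wordProd w).det = 1 := by
  induction w with
  | nil => simp
  | cons b w ih => rw [wordProd_cons, Matrix.det_mul, det_letterMat, ih, one_mul]

lemma letterMat_mul_ne_one (b : Bool) {N : Matrix (Fin 2) (Fin 2) ℤ}
    (hN : ∀ i j, 0 ≤ N i j) : letterMat b * N ≠ 1 := by
  intro h
  cases b <;> simp only [letterMat, Bool.false_eq_true, if_false, if_true, Lmat_mul, Rmat_mul,
    Matrix.one_fin_two, EmbeddingLike.apply_eq_iff_eq, Matrix.vecCons_inj, and_true] at h
  · linarith [hN 1 0]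
  · linarith [hN 0 1]

-- `L N` has first row `≥` second row and `R N` the reverse, so `L N₁ = R N₂` forces a zero row.
lemma Lmat_mul_ne_Rmat_mul {N₁ N₂ : Matrix (Fin 2) (Fin 2) ℤ} (hN₁ : ∀ i j, 0 ≤ N₁ i j)
    (hN₂ : ∀ i j, 0 ≤ N₂ i j) (hd : N₁.det = 1) : Lmat * N₁ ≠ Rmat * N₂ := by
  rw [Lmat_mul, Rmat_mul, Ne, EmbeddingLike.apply_eq_iff_eq]
  simp only [Matrix.vecCons_inj, and_true]
  rw [Matrix.det_fin_two] at hd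
  rintro ⟨⟨h₀₀, h₀₁⟩, h₁₀, h₁₁⟩
  nlinarith [hN₂ 1 0, hN₂ 1 1, hN₁ 0 0, hN₁ 0 1, hN₁ 1 0, hN₁ 1 1]

lemma eq_of_letterMat_mul_eq {a b : Bool} {N₁ N₂ : Matrix (Fin 2) (Fin 2) ℤ}
    (hN₁ : ∀ i j, 0 ≤ N₁ i j) (hN₂ : ∀ i j, 0 ≤ N₂ i j) (hd₁ : N₁.det = 1) (hd₂ : N₂.det = 1)
    (h : letterMat a * N₁ = letterMat b * N₂) : a = b := by
  cases a <;> cases b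
  · rfl
  · exact absurd h.symm (Lmat_mul_ne_Rmat_mul hN₂ hN₁ hd₂)
  · exact absurd h (Lmat_mul_ne_Rmat_mul hN₁ hN₂ hd₁)
  · rfl

theorem wordProd_injective : Function.Injective wordProd := by
  intro w₁
  induction w₁ with
  | nil =>
    rintro (_ | ⟨b, w₂⟩) h
    · rfl
    · exact absurd (h.symm.trans wordProd_nil) (letterMat_mul_ne_one b (wordProd_nonneg w₂))
  | cons a w₁ ih =>
    rintro (_ | ⟨b, w₂⟩) h
    · exact absurd (h.trans wordProd_nil) (letterMat_mul_ne_one a (wordProd_nonneg w₁))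
    · rw [wordProd_cons, wordProd_cons] at h
      obtain rfl := eq_of_letterMat_mul_eq (wordProd_nonneg w₁) (wordProd_nonneg w₂)
        (det_wordProd w₁) (det_wordProd w₂) h
      rw [ih ((isUnit_letterMat a).mul_left_cancel h)]

theorem List.exists_eq_append_cons_cons_ne {α : Type*} {l : List α} {x y : α} (hx : x ∈ l)
    (hy : y ∈ l) (hxy : x ≠ y) : ∃ u a b v, l = u ++ a :: b :: v ∧ a ≠ b := by
  by_contra! h
  have hchain : l.IsChain (· = ·) :=
    List.isChain_iff_forall_rel_of_append_cons_cons.2 fun a b u v hl => h u a b v hl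
  exact hxy ((List.isChain_iff_pairwise.1 hchain).forall hx hy hxy)

lemma one_le_mul_apply_of_det_eq_one {A P : Matrix (Fin 2) (Fin 2) ℤ} (hA : ∀ i j, 0 ≤ A i j)
    (hdet : A.det = 1) (hP : ∀ i j, 1 ≤ P i j) (i j : Fin 2) : 1 ≤ (A * P) i j := by
  rw [Matrix.det_fin_two] at hdet
  have hrow : ∀ i, 1 ≤ A i 0 + A i 1 := Fin.forall_fin_two.2
    ⟨by nlinarith [hA 0 0, hA 0 1, hA 1 0, hA 1 1], by nlinarith [hA 0 0, hA 0 1, hA 1 0, hA 1 1]⟩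
  rw [Matrix.mul_apply, Fin.sum_univ_two]
  nlinarith [hrow i, mul_le_mul_of_nonneg_left (hP 0 j) (hA i 0),
    mul_le_mul_of_nonneg_left (hP 1 j) (hA i 1)]

lemma one_le_mul_apply_of_det_eq_one' {A P : Matrix (Fin 2) (Fin 2) ℤ} (hA : ∀ i j, 0 ≤ A i j)
    (hdet : A.det = 1) (hP : ∀ i j, 1 ≤ P i j) (i j : Fin 2) : 1 ≤ (P * A) i j := by
  rw [Matrix.det_fin_two] at hdet
  have hcol : ∀ j, 1 ≤ A 0 j + A 1 j := Fin.forall_fin_two.2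
    ⟨by nlinarith [hA 0 0, hA 0 1, hA 1 0, hA 1 1], by nlinarith [hA 0 0, hA 0 1, hA 1 0, hA 1 1]⟩
  rw [Matrix.mul_apply, Fin.sum_univ_two]
  nlinarith [hcol j, mul_le_mul_of_nonneg_right (hP i 0) (hA 0 j),
    mul_le_mul_of_nonneg_right (hP i 1) (hA 1 j)]

lemma one_le_wordProd_apply {w : List Bool} (ht : true ∈ w) (hf : false ∈ w) (i j : Fin 2) :
    1 ≤ wordProd w i j := by
  obtain ⟨u, a, b, v, rfl, hab⟩ := List.exists_eq_append_cons_cons_ne ht hf (by decide)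
  have hpair : ∀ i j, 1 ≤ (letterMat a * letterMat b) i j := by
    obtain rfl := Bool.eq_not_of_ne hab.symm
    cases a <;> intro i j <;> fin_cases i <;> fin_cases j <;>
      simp [letterMat, Lmat, Rmat, Matrix.mul_apply]
  have hpairv := one_le_mul_apply_of_det_eq_one' (wordProd_nonneg v) (det_wordProd v) hpair
  simpa [Matrix.mul_assoc] using
    one_le_mul_apply_of_det_eq_one (wordProd_nonneg u) (det_wordProd u) hpairv i j

lemma add_one_le_mul_pow {q : ℝ} (hq : 1 < q) (e : ℕ) :
    (e + 1 : ℝ) ≤ max 1 (q - 1)⁻¹ * q ^ e := by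
  have hC : 1 ≤ max 1 (q - 1)⁻¹ * (q - 1) := calc
    (1 : ℝ) = (q - 1)⁻¹ * (q - 1) := (inv_mul_cancel₀ (by linarith)).symm
    _ ≤ max 1 (q - 1)⁻¹ * (q - 1) := mul_le_mul_of_nonneg_right (le_max_right _ _) (by linarith)
  have hBernoulli : 1 + e * (q - 1) ≤ q ^ e := by
    simpa using one_add_mul_le_pow (show -2 ≤ q - 1 by linarith) e
  calc (e + 1 : ℝ) ≤ max 1 (q - 1)⁻¹ * (1 + e * (q - 1)) := by
        nlinarith [le_max_left 1 (q - 1)⁻¹, (Nat.cast_nonneg e : (0 : ℝ) ≤ e)]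
    _ ≤ max 1 (q - 1)⁻¹ * q ^ e := by gcongr

-- Only the primes below `2 ^ ε⁻¹` have `p ^ ε < 2`; for the others `e + 1 ≤ 2 ^ e ≤ (p ^ e) ^ ε`.
lemma add_one_le_mul_pow_rpow {ε : ℝ} (hε : 0 < ε) {p : ℕ} (hp : 2 ≤ p) (e : ℕ) :
    (e + 1 : ℝ) ≤ (if p < ⌈(2 : ℝ) ^ ε⁻¹⌉₊ then max 1 ((2 : ℝ) ^ ε - 1)⁻¹ else 1) *
      ((p : ℝ) ^ e) ^ ε := by
  have hp' : (2 : ℝ) ≤ p := by exact_mod_cast hp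
  have h2 : 1 < (2 : ℝ) ^ ε := Real.one_lt_rpow (by norm_num) hε
  have hpε : (2 : ℝ) ^ ε ≤ (p : ℝ) ^ ε := by gcongr
  rw [← Real.rpow_natCast_mul (by positivity), mul_comm (e : ℝ),
    Real.rpow_mul_natCast (by positivity)]
  refine (add_one_le_mul_pow (h2.trans_le hpε) e).trans
    (mul_le_mul_of_nonneg_right ?_ (by positivity))
  split_ifs with hsmall
  · gcongr
  · refine max_le le_rfl (inv_le_one_of_one_le₀ ?_)
    have : (2 : ℝ) ^ ε⁻¹ ≤ p := (Nat.le_ceil _).trans (by exact_mod_cast not_lt.1 hsmall)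
    calc (1 : ℝ) = ((2 : ℝ) ^ ε⁻¹) ^ ε - 1 := by
          rw [← Real.rpow_mul (by norm_num), inv_mul_cancel₀ hε.ne', Real.rpow_one]; norm_num
      _ ≤ (p : ℝ) ^ ε - 1 := by gcongr

theorem exists_card_divisors_le_mul_rpow {ε : ℝ} (hε : 0 < ε) :
    ∃ C : ℝ, 0 < C ∧ ∀ n : ℕ, (#n.divisors : ℝ) ≤ C * (n : ℝ) ^ ε := by
  set N := ⌈(2 : ℝ) ^ ε⁻¹⌉₊
  set C := max 1 ((2 : ℝ) ^ ε - 1)⁻¹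
  have hC : 1 ≤ C := le_max_left _ _
  refine ⟨C ^ N, by positivity, fun n => ?_⟩
  rcases eq_or_ne n 0 with rfl | hn
  · simp [Real.zero_rpow hε.ne']
  have hsmall : (∏ p ∈ n.primeFactors, if p < N then C else 1) ≤ C ^ N := by
    rw [prod_ite, prod_const, prod_const, one_pow, mul_one]
    refine pow_le_pow_right₀ hC ((card_le_card fun p hp => ?_).trans (card_range N).le)
    exact mem_range.2 (mem_filter.1 hp).2
  calc (#n.divisors : ℝ) = ∏ p ∈ n.primeFactors, (n.factorization p + 1 : ℝ) := by
        rw [Nat.card_divisors hn]; push_cast; rfl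
    _ ≤ ∏ p ∈ n.primeFactors, ((if p < N then C else 1) * ((p : ℝ) ^ n.factorization p) ^ ε) :=
        prod_le_prod (fun _ _ => by positivity) fun p hp =>
          add_one_le_mul_pow_rpow hε (Nat.prime_of_mem_primeFactors hp).two_le _
    _ = (∏ p ∈ n.primeFactors, if p < N then C else 1) * (n : ℝ) ^ ε := by
        rw [prod_mul_distrib, Real.finsetProd_rpow _ _ (fun _ _ => by positivity)]
        congr 2
        exact_mod_cast (Nat.prod_primeFactors_pow_factorization hn).symm
    _ ≤ C ^ N * (n : ℝ) ^ ε := by gcongr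

def sl2Cover (k : ℕ) : Finset (Matrix (Fin 2) (Fin 2) ℤ) :=
  ((Icc 1 k ×ˢ Icc 1 k).sigma fun p => (p.1 * p.2 - 1).divisors).image
    fun x => !![(x.1.1 : ℤ), x.2; ((x.1.1 * x.1.2 - 1) / x.2 : ℕ), x.1.2]

lemma mem_sl2Cover {k : ℕ} {M : Matrix (Fin 2) (Fin 2) ℤ} (hM : ∀ i j, 1 ≤ M i j)
    (hdet : M.det = 1) (htr : M.trace ≤ k) : M ∈ sl2Cover k := by
  obtain ⟨a, ha⟩ := Int.eq_ofNat_of_zero_le (zero_le_one.trans (hM 0 0))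
  obtain ⟨b, hb⟩ := Int.eq_ofNat_of_zero_le (zero_le_one.trans (hM 0 1))
  obtain ⟨c, hc⟩ := Int.eq_ofNat_of_zero_le (zero_le_one.trans (hM 1 0))
  obtain ⟨d, hd⟩ := Int.eq_ofNat_of_zero_le (zero_le_one.trans (hM 1 1))
  have hpos : 1 ≤ a ∧ 1 ≤ b ∧ 1 ≤ c ∧ 1 ≤ d := by
    have := hM 0 0; have := hM 0 1; have := hM 1 0; have := hM 1 1; omega
  rw [Matrix.det_fin_two, ha, hb, hc, hd] at hdet
  rw [Matrix.trace_fin_two, ha, hd] at htr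
  have had : a * d - 1 = b * c := by
    have : a * d = b * c + 1 := by exact_mod_cast (by linarith : (a * d : ℤ) = b * c + 1)
    omega
  simp only [sl2Cover, mem_image, mem_sigma, mem_product, mem_Icc, Nat.mem_divisors]
  refine ⟨⟨(a, d), b⟩, ⟨⟨⟨hpos.1, ?_⟩, hpos.2.2.2, ?_⟩, had ▸ dvd_mul_right b c, ?_⟩, ?_⟩ <;>
    dsimp only
  · omega
  · omega
  · exact had ▸ (Nat.mul_pos hpos.2.1 hpos.2.2.1).ne'
  · rw [Matrix.eta_fin_two M, ha, hb, hc, hd, had, Nat.mul_div_cancel_left _ hpos.2.1]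

lemma card_sl2Cover_le_mul_rpow {C δ : ℝ} (hC : 0 ≤ C) (hδ : 0 ≤ δ)
    (h : ∀ n : ℕ, (#n.divisors : ℝ) ≤ C * (n : ℝ) ^ δ) (k : ℕ) :
    (#(sl2Cover k) : ℝ) ≤ C * (k : ℝ) ^ (2 + 2 * δ) :=
  calc (#(sl2Cover k) : ℝ) ≤ ∑ p ∈ Icc 1 k ×ˢ Icc 1 k, (#(p.1 * p.2 - 1).divisors : ℝ) := by
        exact_mod_cast card_image_le.trans (card_sigma _ _).le
    _ ≤ ∑ p ∈ Icc 1 k ×ˢ Icc 1 k, C * ((k : ℝ) ^ 2) ^ δ := by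
        refine sum_le_sum fun p hp => (h _).trans ?_
        simp only [mem_product, mem_Icc] at hp
        have : p.1 * p.2 - 1 ≤ k ^ 2 :=
          (Nat.sub_le _ _).trans (sq k ▸ Nat.mul_le_mul hp.1.2 hp.2.2)
        gcongr
        exact_mod_cast this
    _ = C * (k : ℝ) ^ (2 + 2 * δ) := by
        rw [sum_const, card_product, Nat.card_Icc, nsmul_eq_mul,
          Real.rpow_add' (by positivity) (by positivity),
          ← Real.rpow_natCast_mul (by positivity), Real.rpow_two]
        push_cast
        ring

lemma ncard_wordClasses_le (k : ℕ) :
    {C : Set (List Bool) | ∃ w : List Bool, w ≠ [] ∧ true ∈ w ∧ false ∈ w ∧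
      (wordProd w).trace ≤ (k : ℤ) ∧ C = {v | wordRel w v}}.ncard ≤ #(sl2Cover k) := by
  let wordClass (M : Matrix (Fin 2) (Fin 2) ℤ) : Set (List Bool) :=
    {v | wordRel (Function.invFun wordProd M) v}
  calc _ ≤ (wordClass '' sl2Cover k).ncard := by
        refine Set.ncard_le_ncard ?_ ((sl2Cover k).finite_toSet.image _)
        rintro _ ⟨w, -, ht, hf, htr, rfl⟩
        refine ⟨wordProd w, mem_sl2Cover (one_le_wordProd_apply ht hf) (det_wordProd w) htr, ?_⟩
        simp only [wordClass, Function.leftInverse_invFun wordProd_injective w]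
    _ ≤ #(sl2Cover k) :=
        (Set.ncard_image_le (sl2Cover k).finite_toSet).trans (Set.ncard_coe_finset _).le

/-- For every `ε > 0` there is `c_ε > 0` such that the number of equivalence classes of
nonempty words containing both letters and of trace at most `k` is at most `c_ε·k^{2+ε}`,
for all `k ≥ 2`. -/
theorem card_wordClasses_trace_le : ∀ ε : ℝ, 0 < ε → ∃ c : ℝ, 0 < c ∧
    ∀ k : ℕ, 2 ≤ k →
      (Set.ncard {C : Set (List Bool) | ∃ w : List Bool,
          w ≠ [] ∧ true ∈ w ∧ false ∈ w ∧ (wordProd w).trace ≤ (k : ℤ) ∧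
            C = {v | wordRel w v}} : ℝ)
        ≤ c * (k : ℝ) ^ ((2 : ℝ) + ε) := by
  intro ε hε
  obtain ⟨C, hC, hdiv⟩ := exists_card_divisors_le_mul_rpow (half_pos hε)
  refine ⟨C, hC, fun k _ => ?_⟩
  calc _ ≤ (#(sl2Cover k) : ℝ) := by exact_mod_cast ncard_wordClasses_le k
    _ ≤ C * (k : ℝ) ^ (2 + 2 * (ε / 2)) :=
        card_sl2Cover_le_mul_rpow hC.le (half_pos hε).le hdiv k
    _ = C * (k : ℝ) ^ ((2 : ℝ) + ε) := by ring_nf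
end
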